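/- (Perturbed linear recurrence for the 3-armed DPO-Unif iteration.) Let 𝒴 = {a₁, a₂, a₃} with rewards r(a₁) = 0, r(a₂) = 1/3, r(a₃) = 1, uniform reference policy, β > 0, η > 0, and let the parameters evolve by the exact DPO-Unif update θ^(t+1)_a = θ^(t)_a + 4ηβ Σ_{a'∈𝒴} Δ(a,a';θ^(t)). Set x_t := δ(a₂,a₁;θ^(t)), y_t := δ(a₃,a₂;θ^(t)), s₁ = σ'(1/3), s₂ = σ'(2/3), s₃ = σ'(1), and let B = [[1 − 4ηβ²(2s₁ + s₃), 4ηβ²(s₂ − s₃)], [4ηβ²(s₁ − s₃), 1 − 4ηβ²(2s₂ + s₃)]]. Then for every t ∈ ℕ: |x_{t+1} − B₁₁ x_t − B₁₂ y_t| ≤ ηβ² (4x_t² + 3y_t²)/(3√3) and |y_{t+1} − B₂₁ x_t − B₂₂ y_t| ≤ ηβ² (3x_t² + 4y_t²)/(3√3). -/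

import Mathlib

/-!
Since `σ(-z) = 1 - σ(z)`, `Δ` is antisymmetric, and the update moves `x = δ(a₂,a₁)` to
`x - 4ηβ²(2Δ(a₂,a₁) - Δ(a₃,a₂) + Δ(a₃,a₁))` (and `y` symmetrically). Each
`Δ(a,a') = σ(c) - σ(c - δ(a,a'))` with `c = r(a) - r(a')` is `σ'(c) δ(a,a')` up to a Taylor
error `δ(a,a')² / (12√3)`, because `|σ''| = |σ(1-σ)(1-2σ)| ≤ 1/(6√3)`. As
`δ(a₃,a₁) = x + y`, the three errors add up to at most
`(2x² + y² + (x+y)²)/(12√3) ≤ (4x² + 3y²)/(12√3)`.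
-/

/-- The sigmoid function. -/
noncomputable def sig (x : ℝ) : ℝ := 1 / (1 + Real.exp (-x))

/-- The derivative of the sigmoid function. -/
noncomputable def sig' (x : ℝ) : ℝ := sig x * (1 - sig x)

/-- The rewards of the 3-armed bandit example: `r(a₁)=0`, `r(a₂)=1/3`, `r(a₃)=1`. -/
noncomputable def r3 : Fin 3 → ℝ := ![0, 1/3, 1]

open Real

theorem abs_sub_sub_deriv_mul_le_of_le {f f' : ℝ → ℝ} {L : ℝ}
    (hf : ∀ x, HasDerivAt f (f' x) x) (hL : ∀ x y, |f' x - f' y| ≤ L * |x - y|)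
    {a b : ℝ} (hab : a ≤ b) :
    |f b - f a - f' a * (b - a)| ≤ L / 2 * (b - a) ^ 2 := by
  have hg : ∀ x, HasDerivAt (fun x => f x - f a - f' a * (x - a)) (f' x - f' a) x := fun x =>
    ((hf x).sub_const (f a)).fun_sub
      (((hasDerivAt_id x).sub_const a).const_mul (f' a)) |>.congr_deriv (by simp)
  have hB : ∀ x, HasDerivAt (fun x => L / 2 * (x - a) ^ 2) (L * (x - a)) x := fun x =>
    (((hasDerivAt_id x).sub_const a).fun_pow 2).const_mul (L / 2) |>.congr_deriv
      (by simp only [id]; ring)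
  refine image_norm_le_of_norm_deriv_right_le_deriv_boundary
    (fun x _ => (hg x).continuousAt.continuousWithinAt) (fun x _ => (hg x).hasDerivWithinAt)
    (by simp) hB (fun x hx => ?_) ⟨hab, le_rfl⟩
  simpa [abs_of_nonneg (sub_nonneg.2 hx.1)] using hL x a

theorem abs_sub_sub_deriv_mul_le {f f' : ℝ → ℝ} {L : ℝ}
    (hf : ∀ x, HasDerivAt f (f' x) x) (hL : ∀ x y, |f' x - f' y| ≤ L * |x - y|) (a b : ℝ) :
    |f b - f a - f' a * (b - a)| ≤ L / 2 * (b - a) ^ 2 := by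
  rcases le_total a b with hab | hba
  · exact abs_sub_sub_deriv_mul_le_of_le hf hL hab
  · have hneg : ∀ x, HasDerivAt (fun x => f (-x)) (-f' (-x)) x := fun x => by
      simpa [Function.comp_def] using (hf (-x)).comp x (hasDerivAt_neg x)
    have hLneg : ∀ x y, |-f' (-x) - -f' (-y)| ≤ L * |x - y| := fun x y => by
      simpa only [neg_sub_neg] using hL (-y) (-x)
    have := abs_sub_sub_deriv_mul_le_of_le hneg hLneg (neg_le_neg hba)
    simp only [neg_neg] at this
    convert this using 2 <;> ring

theorem sig_eq_sigmoid : sig = sigmoid := funext fun x => by simp [sig, sigmoid_def]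

theorem sig_neg (x : ℝ) : sig (-x) = 1 - sig x := by
  simp only [sig_eq_sigmoid, sigmoid_neg]

theorem hasDerivAt_sig (x : ℝ) : HasDerivAt sig (sig' x) x := by
  simpa only [sig', sig_eq_sigmoid] using hasDerivAt_sigmoid x

theorem hasDerivAt_sig' (x : ℝ) : HasDerivAt sig' (sig' x * (1 - 2 * sig x)) x :=
  (hasDerivAt_sig x).fun_mul ((hasDerivAt_sig x).const_sub 1) |>.congr_deriv
    (by unfold sig'; ring)

theorem abs_sig'_mul_one_sub_two_mul_sig_le (x : ℝ) :
    |sig' x * (1 - 2 * sig x)| ≤ 1 / (6 * √3) := by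
  have hs : 0 < sig x := by simpa [sig_eq_sigmoid] using sigmoid_pos x
  have hs1 : sig x < 1 := by simpa [sig_eq_sigmoid] using sigmoid_lt_one x
  have h108 : (1 / (6 * √3)) ^ 2 = 1 / 108 := by
    rw [div_pow, mul_pow, sq_sqrt (by norm_num)]
    norm_num
  refine abs_le_of_sq_le_sq ?_ (by positivity)
  rw [h108]
  -- with `p = σ(1-σ)`: `(1 - 2σ)² = 1 - 4p` and `1 - 108 p² (1 - 4p) = (1 - 6p)² (1 + 12p)`
  have hp : 0 < sig x * (1 - sig x) := mul_pos hs (by linarith)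
  have key : 0 ≤ (1 - 6 * (sig x * (1 - sig x))) ^ 2 * (1 + 12 * (sig x * (1 - sig x))) := by
    positivity
  unfold sig'
  nlinarith [key]

theorem abs_sig'_sub_le (x y : ℝ) : |sig' x - sig' y| ≤ 1 / (6 * √3) * |x - y| := by
  simpa only [Real.norm_eq_abs] using Convex.norm_image_sub_le_of_norm_hasDerivWithin_le
    (fun x _ => (hasDerivAt_sig' x).hasDerivWithinAt)
    (fun x _ => abs_sig'_mul_one_sub_two_mul_sig_le x) convex_univ (Set.mem_univ y) (Set.mem_univ x)

theorem abs_sig_sub_sig_sub_le (c u : ℝ) :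
    |sig c - sig (c - u) - sig' c * u| ≤ 1 / (12 * √3) * u ^ 2 := by
  have := abs_sub_sub_deriv_mul_le hasDerivAt_sig abs_sig'_sub_le c (c - u)
  rw [← abs_neg]
  convert this using 2 <;> ring

theorem abs_two_mul_sub_add_le {K x y E₁ E₂ E₃ : ℝ} (hK : 0 ≤ K)
    (h₁ : |E₁| ≤ K * x ^ 2) (h₂ : |E₂| ≤ K * y ^ 2) (h₃ : |E₃| ≤ K * (x + y) ^ 2) :
    |2 * E₁ - E₂ + E₃| ≤ K * (4 * x ^ 2 + 3 * y ^ 2) :=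
  calc |2 * E₁ - E₂ + E₃| ≤ 2 * |E₁| + |E₂| + |E₃| := by
        have := abs_sub (2 * E₁) E₂
        have := abs_add_le (2 * E₁ - E₂) E₃
        rw [abs_mul, abs_two] at *
        linarith
    _ ≤ K * (2 * x ^ 2 + y ^ 2 + (x + y) ^ 2) := by linarith
    _ ≤ K * (4 * x ^ 2 + 3 * y ^ 2) := by nlinarith [mul_nonneg hK (sq_nonneg (x - y))]

theorem abs_linearization_error_le {κ K x y x' y' s₁ s₂ s₃ G₁ G₂ G₃ : ℝ}
    (hκ : 0 ≤ κ) (hK : 0 ≤ K)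
    (hx' : x' = x - κ * (2 * G₁ - G₂ + G₃)) (hy' : y' = y - κ * (2 * G₂ - G₁ + G₃))
    (h₁ : |G₁ - s₁ * x| ≤ K * x ^ 2) (h₂ : |G₂ - s₂ * y| ≤ K * y ^ 2)
    (h₃ : |G₃ - s₃ * (x + y)| ≤ K * (x + y) ^ 2) :
    |x' - (1 - κ * (2 * s₁ + s₃)) * x - κ * (s₂ - s₃) * y|
        ≤ κ * (K * (4 * x ^ 2 + 3 * y ^ 2)) ∧
      |y' - κ * (s₁ - s₃) * x - (1 - κ * (2 * s₂ + s₃)) * y|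
        ≤ κ * (K * (3 * x ^ 2 + 4 * y ^ 2)) := by
  have hx'_err : x' - (1 - κ * (2 * s₁ + s₃)) * x - κ * (s₂ - s₃) * y
      = -(κ * (2 * (G₁ - s₁ * x) - (G₂ - s₂ * y) + (G₃ - s₃ * (x + y)))) := by
    rw [hx']; ring
  have hy'_err : y' - κ * (s₁ - s₃) * x - (1 - κ * (2 * s₂ + s₃)) * y
      = -(κ * (2 * (G₂ - s₂ * y) - (G₁ - s₁ * x) + (G₃ - s₃ * (y + x)))) := by
    rw [hy']; ring
  simp only [hx'_err, hy'_err, abs_neg, abs_mul, abs_of_nonneg hκ]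
  refine ⟨mul_le_mul_of_nonneg_left (abs_two_mul_sub_add_le hK h₁ h₂ h₃) hκ, ?_⟩
  calc _ ≤ κ * (K * (4 * y ^ 2 + 3 * x ^ 2)) :=
        mul_le_mul_of_nonneg_left (abs_two_mul_sub_add_le hK h₂ h₁ (by rwa [add_comm y x])) hκ
    _ = _ := by ring

section Gaps

variable {ι : Type*} (r : ι → ℝ) (β : ℝ)

-- `marginGap r β θ a b` and `sigGap r β θ a b` are the paper's `δ(a,b;θ)` and `Δ(a,b;θ)`.
def marginGap (θ : ι → ℝ) (a b : ι) : ℝ := r a - r b - β * (θ a - θ b)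

noncomputable def sigGap (θ : ι → ℝ) (a b : ι) : ℝ := sig (r a - r b) - sig (β * (θ a - θ b))

theorem marginGap_add (θ : ι → ℝ) (a b c : ι) :
    marginGap r β θ a b + marginGap r β θ b c = marginGap r β θ a c := by
  unfold marginGap; ring

theorem sigGap_swap (θ : ι → ℝ) (a b : ι) : sigGap r β θ b a = -sigGap r β θ a b := by
  unfold sigGap
  rw [show r b - r a = -(r a - r b) by ring, show β * (θ b - θ a) = -(β * (θ a - θ b)) by ring,
    sig_neg, sig_neg]
  ring

theorem abs_sigGap_sub_le (θ : ι → ℝ) (a b : ι) :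
    |sigGap r β θ a b - sig' (r a - r b) * marginGap r β θ a b|
      ≤ 1 / (12 * √3) * marginGap r β θ a b ^ 2 := by
  have h := abs_sig_sub_sig_sub_le (r a - r b) (marginGap r β θ a b)
  rwa [marginGap, sub_sub_cancel] at h

theorem marginGap_of_update [Fintype ι] {κ : ℝ} {θ θ' : ι → ℝ}
    (hθ' : ∀ a, θ' a = θ a + κ * ∑ a', sigGap r β θ a a') (a b : ι) :
    marginGap r β θ' a b
      = marginGap r β θ a b - β * κ * (∑ a', sigGap r β θ a a' - ∑ a', sigGap r β θ b a') := by
  simp only [marginGap, hθ']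
  ring

end Gaps

theorem Fin.sum_sub_sum_one_zero_of_antisymm {g : Fin 3 → Fin 3 → ℝ}
    (hg : ∀ a b, g b a = -g a b) :
    ∑ a, g 1 a - ∑ a, g 0 a = 2 * g 1 0 - g 2 1 + g 2 0 := by
  simp only [Fin.sum_univ_three]
  linarith [hg 0 0, hg 1 1, hg 1 0, hg 2 0, hg 2 1]

theorem Fin.sum_sub_sum_two_one_of_antisymm {g : Fin 3 → Fin 3 → ℝ}
    (hg : ∀ a b, g b a = -g a b) :
    ∑ a, g 2 a - ∑ a, g 1 a = 2 * g 2 1 - g 1 0 + g 2 0 := by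
  simp only [Fin.sum_univ_three]
  linarith [hg 1 1, hg 2 2, hg 1 0, hg 2 0, hg 2 1]

theorem r3_sub_r3 : r3 1 - r3 0 = 1 / 3 ∧ r3 2 - r3 1 = 2 / 3 ∧ r3 2 - r3 0 = 1 := by
  norm_num [r3, Matrix.cons_val_two]

theorem dpo_unif_three_arm_recurrence_general
    (β η : ℝ) (hη : 0 < η)
    (θ : ℕ → Fin 3 → ℝ)
    (hupd : ∀ t a, θ (t + 1) a = θ t a +
      4 * η * β * ∑ a' : Fin 3,
        (sig (r3 a - r3 a') - sig (β * (θ t a - θ t a')))) :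
    ∀ t : ℕ,
      (fun x y x' y' =>
        |x' - (1 - 4 * η * β ^ 2 * (2 * sig' (1/3) + sig' 1)) * x
            - (4 * η * β ^ 2 * (sig' (2/3) - sig' 1)) * y|
          ≤ η * β ^ 2 * (4 * x ^ 2 + 3 * y ^ 2) / (3 * Real.sqrt 3) ∧
        |y' - (4 * η * β ^ 2 * (sig' (1/3) - sig' 1)) * x
            - (1 - 4 * η * β ^ 2 * (2 * sig' (2/3) + sig' 1)) * y|
          ≤ η * β ^ 2 * (3 * x ^ 2 + 4 * y ^ 2) / (3 * Real.sqrt 3))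
      (r3 1 - r3 0 - β * (θ t 1 - θ t 0))
      (r3 2 - r3 1 - β * (θ t 2 - θ t 1))
      (r3 1 - r3 0 - β * (θ (t + 1) 1 - θ (t + 1) 0))
      (r3 2 - r3 1 - β * (θ (t + 1) 2 - θ (t + 1) 1)) := by
  intro t
  have hstep := marginGap_of_update r3 β (hupd t)
  have hswap := sigGap_swap r3 β (θ t)
  obtain ⟨h₁₀, h₂₁, h₂₀⟩ := r3_sub_r3
  have hE₁ := abs_sigGap_sub_le r3 β (θ t) 1 0
  have hE₂ := abs_sigGap_sub_le r3 β (θ t) 2 1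
  have hE₃ := abs_sigGap_sub_le r3 β (θ t) 2 0
  rw [h₁₀] at hE₁
  rw [h₂₁] at hE₂
  rw [h₂₀, ← marginGap_add r3 β (θ t) 2 1 0, add_comm (marginGap r3 β (θ t) 2 1)] at hE₃
  refine (abs_linearization_error_le (by positivity : 0 ≤ 4 * η * β ^ 2) (by positivity)
    ((hstep 1 0).trans (by rw [Fin.sum_sub_sum_one_zero_of_antisymm hswap]; ring))
    ((hstep 2 1).trans (by rw [Fin.sum_sub_sum_two_one_of_antisymm hswap]; ring))
    hE₁ hE₂ hE₃).imp (·.trans_eq ?_) (·.trans_eq ?_) <;>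
  · unfold marginGap; ring

/-- **Perturbed linear recurrence for the 3-armed DPO-Unif iteration.**
With `x_t = δ(a₂,a₁;θ^t)`, `y_t = δ(a₃,a₂;θ^t)`, the exact DPO-Unif iterates
satisfy a linear recursion governed by the matrix `B`, up to quadratic error
terms bounded by `ηβ²(4x_t²+3y_t²)/(3√3)` and `ηβ²(3x_t²+4y_t²)/(3√3)`. -/
theorem dpo_unif_three_arm_recurrence
    (β η : ℝ) (hβ : 0 < β) (hη : 0 < η)
    (θ : ℕ → Fin 3 → ℝ)
    (hupd : ∀ t a, θ (t + 1) a = θ t a +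
      4 * η * β * ∑ a' : Fin 3,
        (sig (r3 a - r3 a') - sig (β * (θ t a - θ t a')))) :
    ∀ t : ℕ,
      (fun x y x' y' =>
        |x' - (1 - 4 * η * β ^ 2 * (2 * sig' (1/3) + sig' 1)) * x
            - (4 * η * β ^ 2 * (sig' (2/3) - sig' 1)) * y|
          ≤ η * β ^ 2 * (4 * x ^ 2 + 3 * y ^ 2) / (3 * Real.sqrt 3) ∧
        |y' - (4 * η * β ^ 2 * (sig' (1/3) - sig' 1)) * x
            - (1 - 4 * η * β ^ 2 * (2 * sig' (2/3) + sig' 1)) * y|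
          ≤ η * β ^ 2 * (3 * x ^ 2 + 4 * y ^ 2) / (3 * Real.sqrt 3))
      (r3 1 - r3 0 - β * (θ t 1 - θ t 0))
      (r3 2 - r3 1 - β * (θ t 2 - θ t 1))
      (r3 1 - r3 0 - β * (θ (t + 1) 1 - θ (t + 1) 0))
      (r3 2 - r3 1 - β * (θ (t + 1) 2 - θ (t + 1) 1)) :=
  dpo_unif_three_arm_recurrence_general β η hη θ hupd
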